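/- Let A : ℝⁿ → ℝⁿ be an invertible linear map with ‖A‖² ≤ 2 − 2t₀ for some t₀ > 0 and det A = 1, and let μₙ be the standard Gaussian measure on ℝⁿ. Then the Radon–Nikodym derivative h(x) = exp((‖x‖² − ‖A⁻¹x‖²)/2) satisfies ∫_{ℝⁿ} h(x)² dμₙ(x) ≤ (2π)^{-n/2} ∫_{ℝⁿ} exp(−(t₀/2)‖x‖²) dλₙ(x) = t₀^{-n/2}; in particular h ∈ L²(μₙ) with a bound independent of the particular A (given t₀). -/

import Mathlib

open MeasureTheory

open scoped ENNReal

/-- The standard `n`-dimensional Gaussian measure `dμₙ = (2π)^{-n/2} exp(-‖x‖²/2) dλₙ`. -/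
noncomputable def gaussianMeasure (n : ℕ) : Measure (EuclideanSpace ℝ (Fin n)) :=
  volume.withDensity fun x =>
    ENNReal.ofReal ((2 * Real.pi) ^ (-(n : ℝ) / 2) * Real.exp (-‖x‖ ^ 2 / 2))

/-!
Since `‖x‖ ≤ ‖A‖ ‖A⁻¹x‖` and `‖A‖² ≤ 2 - 2t₀`, we get `‖x‖²/2 - ‖A⁻¹x‖² ≤ -t₀ ‖A⁻¹x‖²` and
`‖A⁻¹x‖² ≥ ‖x‖²/2`, so `h(x)²` times the Gaussian density `(2π)^{-n/2} exp(-‖x‖²/2)` is at most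
`(2π)^{-n/2} exp(-(t₀/2)‖x‖²)`, an integrable Gaussian whose integral is `t₀^{-n/2}`.
-/

open Real

section GaussianIntegral

variable {V : Type*} [NormedAddCommGroup V] [InnerProductSpace ℝ V] [FiniteDimensional ℝ V]
  [MeasurableSpace V] [BorelSpace V]

theorem integrable_rexp_neg_mul_sq_norm {b : ℝ} (hb : 0 < b) :
    Integrable fun v : V => rexp (-b * ‖v‖ ^ 2) := by
  have h := (GaussianFourier.integrable_cexp_neg_mul_sq_norm_add
    (V := V) (b := (b : ℂ)) (by simpa using hb) 0 0).norm
  convert h using 2 with v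
  simp [Complex.norm_exp]
  left; norm_cast

theorem two_pi_rpow_mul_integral_rexp_neg_half_mul_sq_norm {t : ℝ} (ht : 0 < t) :
    (2 * π) ^ (-(Module.finrank ℝ V : ℝ) / 2) * ∫ v : V, rexp (-(t / 2) * ‖v‖ ^ 2)
      = t ^ (-(Module.finrank ℝ V : ℝ) / 2) := by
  have h2pi : (0 : ℝ) < 2 * π := by positivity
  rw [GaussianFourier.integral_rexp_neg_mul_sq_norm (by positivity),
    show π / (t / 2) = 2 * π * t⁻¹ by field_simp, neg_div, rpow_neg h2pi.le,
    ← inv_rpow h2pi.le, ← mul_rpow (by positivity) (by positivity),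
    show (2 * π)⁻¹ * (2 * π * t⁻¹) = t⁻¹ by field_simp, inv_rpow ht.le, ← rpow_neg ht.le]

end GaussianIntegral

theorem sq_norm_div_two_sub_sq_norm_le {𝕜 E F : Type*} [NontriviallyNormedField 𝕜]
    [SeminormedAddCommGroup E] [SeminormedAddCommGroup F] [NormedSpace 𝕜 E] [NormedSpace 𝕜 F]
    (T : E →L[𝕜] F) {t : ℝ} (ht : 0 ≤ t) (hT : ‖T‖ ^ 2 ≤ 2 - 2 * t) (y : E) :
    ‖T y‖ ^ 2 / 2 - ‖y‖ ^ 2 ≤ -(t / 2) * ‖T y‖ ^ 2 := by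
  have hTy : ‖T y‖ ^ 2 ≤ ‖T‖ ^ 2 * ‖y‖ ^ 2 := by
    rw [← mul_pow]; exact pow_le_pow_left₀ (norm_nonneg _) (T.le_opNorm y) 2
  have hTy' : ‖T y‖ ^ 2 ≤ (2 - 2 * t) * ‖y‖ ^ 2 :=
    hTy.trans (mul_le_mul_of_nonneg_right hT (sq_nonneg _))
  have hy : ‖T y‖ ^ 2 / 2 ≤ ‖y‖ ^ 2 := by nlinarith [sq_nonneg ‖y‖]
  nlinarith [mul_le_mul_of_nonneg_left hy ht]

noncomputable def gaussianDensity (n : ℕ) (x : EuclideanSpace ℝ (Fin n)) : ℝ :=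
  (2 * π) ^ (-(n : ℝ) / 2) * rexp (-‖x‖ ^ 2 / 2)

section GaussianMeasure

variable {n : ℕ}

theorem gaussianMeasure_eq_withDensity :
    gaussianMeasure n = volume.withDensity fun x => ENNReal.ofReal (gaussianDensity n x) :=
  rfl

theorem gaussianDensity_nonneg (x : EuclideanSpace ℝ (Fin n)) : 0 ≤ gaussianDensity n x := by
  unfold gaussianDensity; positivity

theorem measurable_gaussianDensity : Measurable (gaussianDensity n) := by
  unfold gaussianDensity; fun_prop

theorem integral_gaussianMeasure (f : EuclideanSpace ℝ (Fin n) → ℝ) :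
    ∫ x, f x ∂gaussianMeasure n = ∫ x, gaussianDensity n x * f x := by
  rw [gaussianMeasure_eq_withDensity, integral_withDensity_eq_integral_toReal_smul
    measurable_gaussianDensity.ennreal_ofReal (by simp)]
  simp only [ENNReal.toReal_ofReal (gaussianDensity_nonneg _), smul_eq_mul]

theorem integrable_gaussianMeasure_iff {f : EuclideanSpace ℝ (Fin n) → ℝ} :
    Integrable f (gaussianMeasure n) ↔ Integrable fun x => gaussianDensity n x * f x := by
  rw [gaussianMeasure_eq_withDensity,
    integrable_withDensity_iff measurable_gaussianDensity.ennreal_ofReal (by simp)]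
  simp only [ENNReal.toReal_ofReal (gaussianDensity_nonneg _), mul_comm (f _)]

end GaussianMeasure

theorem gaussianDensity_mul_rexp_sq_le {n : ℕ} {t : ℝ} (ht : 0 ≤ t)
    (A : EuclideanSpace ℝ (Fin n) ≃ₗ[ℝ] EuclideanSpace ℝ (Fin n))
    (hA : ‖LinearMap.toContinuousLinearMap
      (A : EuclideanSpace ℝ (Fin n) →ₗ[ℝ] EuclideanSpace ℝ (Fin n))‖ ^ 2 ≤ 2 - 2 * t)
    (x : EuclideanSpace ℝ (Fin n)) :
    gaussianDensity n x * rexp ((‖x‖ ^ 2 - ‖A.symm x‖ ^ 2) / 2) ^ 2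
      ≤ (2 * π) ^ (-(n : ℝ) / 2) * rexp (-(t / 2) * ‖x‖ ^ 2) := by
  have key := sq_norm_div_two_sub_sq_norm_le _ ht hA (A.symm x)
  simp only [LinearMap.coe_toContinuousLinearMap', LinearEquiv.coe_coe,
    LinearEquiv.apply_symm_apply] at key
  rw [gaussianDensity, mul_assoc, ← Real.exp_nat_mul, ← Real.exp_add]
  gcongr
  linarith

theorem stmt_17_general {n : ℕ} (t₀ : ℝ) (ht₀ : 0 < t₀)
    (A : EuclideanSpace ℝ (Fin n) ≃ₗ[ℝ] EuclideanSpace ℝ (Fin n))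
    (hA : ‖LinearMap.toContinuousLinearMap
      (A : EuclideanSpace ℝ (Fin n) →ₗ[ℝ] EuclideanSpace ℝ (Fin n))‖ ^ 2 ≤ 2 - 2 * t₀) :
    (∫ x, Real.exp ((‖x‖ ^ 2 - ‖A.symm x‖ ^ 2) / 2) ^ 2 ∂(gaussianMeasure n))
        ≤ (2 * Real.pi) ^ (-(n : ℝ) / 2)
          * ∫ x : EuclideanSpace ℝ (Fin n), Real.exp (-(t₀ / 2) * ‖x‖ ^ 2) ∧
      (2 * Real.pi) ^ (-(n : ℝ) / 2)
          * (∫ x : EuclideanSpace ℝ (Fin n), Real.exp (-(t₀ / 2) * ‖x‖ ^ 2))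
        = t₀ ^ (-(n : ℝ) / 2) ∧
      MemLp (fun x => Real.exp ((‖x‖ ^ 2 - ‖A.symm x‖ ^ 2) / 2)) 2 (gaussianMeasure n) := by
  have hbound := gaussianDensity_mul_rexp_sq_le ht₀.le A hA
  have hdom : Integrable fun x : EuclideanSpace ℝ (Fin n) =>
      (2 * π) ^ (-(n : ℝ) / 2) * rexp (-(t₀ / 2) * ‖x‖ ^ 2) :=
    (integrable_rexp_neg_mul_sq_norm (by positivity)).const_mul _
  have hcont : Continuous fun x => rexp ((‖x‖ ^ 2 - ‖A.symm x‖ ^ 2) / 2) := by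
    have : Continuous fun x => A.symm x := A.symm.toContinuousLinearEquiv.continuous
    fun_prop
  have hint : Integrable fun x => gaussianDensity n x * rexp ((‖x‖ ^ 2 - ‖A.symm x‖ ^ 2) / 2) ^ 2 :=
    hdom.mono' (measurable_gaussianDensity.aestronglyMeasurable.mul
      (hcont.pow 2).aestronglyMeasurable) <| .of_forall fun x => by
        rw [norm_of_nonneg (by have := gaussianDensity_nonneg x; positivity)]
        exact hbound x
  have hmass := two_pi_rpow_mul_integral_rexp_neg_half_mul_sq_norm
    (V := EuclideanSpace ℝ (Fin n)) ht₀
  rw [finrank_euclideanSpace_fin] at hmass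
  refine ⟨?_, hmass, ?_⟩
  · rw [integral_gaussianMeasure, ← integral_const_mul]
    exact integral_mono hint hdom hbound
  · rw [memLp_two_iff_integrable_sq hcont.aestronglyMeasurable, integrable_gaussianMeasure_iff]
    exact hint

/-- Let `A : ℝⁿ → ℝⁿ` be an invertible linear map with `‖A‖² ≤ 2 − 2t₀`
(`t₀ > 0`) and `det A = 1`, and let `μₙ` be the standard Gaussian measure. Then
`h(x) = exp((‖x‖² − ‖A⁻¹x‖²)/2)` satisfies
`∫ h² dμₙ ≤ (2π)^{-n/2} ∫ exp(−(t₀/2)‖x‖²) dλₙ = t₀^{-n/2}`;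
in particular `h ∈ L²(μₙ)` with a bound depending only on `t₀` and `n`. -/
theorem stmt_17 {n : ℕ} (t₀ : ℝ) (ht₀ : 0 < t₀)
    (A : EuclideanSpace ℝ (Fin n) ≃ₗ[ℝ] EuclideanSpace ℝ (Fin n))
    (hA : ‖LinearMap.toContinuousLinearMap
      (A : EuclideanSpace ℝ (Fin n) →ₗ[ℝ] EuclideanSpace ℝ (Fin n))‖ ^ 2 ≤ 2 - 2 * t₀)
    (hdet : LinearMap.det
      (A : EuclideanSpace ℝ (Fin n) →ₗ[ℝ] EuclideanSpace ℝ (Fin n)) = 1) :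
    (∫ x, Real.exp ((‖x‖ ^ 2 - ‖A.symm x‖ ^ 2) / 2) ^ 2 ∂(gaussianMeasure n))
        ≤ (2 * Real.pi) ^ (-(n : ℝ) / 2)
          * ∫ x : EuclideanSpace ℝ (Fin n), Real.exp (-(t₀ / 2) * ‖x‖ ^ 2) ∧
      (2 * Real.pi) ^ (-(n : ℝ) / 2)
          * (∫ x : EuclideanSpace ℝ (Fin n), Real.exp (-(t₀ / 2) * ‖x‖ ^ 2))
        = t₀ ^ (-(n : ℝ) / 2) ∧
      MemLp (fun x => Real.exp ((‖x‖ ^ 2 - ‖A.symm x‖ ^ 2) / 2)) 2 (gaussianMeasure n) :=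
  stmt_17_general t₀ ht₀ A hA
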